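/- On any almost paracontact metric manifold the Levi-Civita connection satisfies 2g((∇_X ψ)Y, Z) = −3dΨ(X, ψY, ψZ) − 3dΨ(X, Y, Z) − g(K^(1)(Y,Z), ψX) + K^(2)(Y,Z)τ(X) + 2dτ(ψY, X)τ(Z) − 2dτ(ψZ, X)τ(Y) for all vector fields X, Y, Z. -/
import Mathlib


noncomputable section

/-!
An abstract model of smooth geometry: `F` plays the role of the algebra of
smooth real-valued functions on a manifold `M`, `V` plays the role of the
`C^∞(M)`-module of smooth vector fields on `M` (with its Lie bracket), and
`D X f` represents the directional derivative of the function `f` along the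
vector field `X`.
-/
structure SmoothSetting (F V : Type*) [CommRing F] [Algebra ℝ F]
    [LieRing V] [Module F V] [Module ℝ V] [IsScalarTower ℝ F V] where
  D : V → F → F
  D_add : ∀ (X : V) (f g : F), D X (f + g) = D X f + D X g
  D_mul : ∀ (X : V) (f g : F), D X (f * g) = f * D X g + g * D X f
  D_addX : ∀ (X Y : V) (f : F), D (X + Y) f = D X f + D Y f
  D_smulX : ∀ (f : F) (X : V) (k : F), D (f • X) k = f * D X k
  D_bracket : ∀ (X Y : V) (f : F), D ⁅X, Y⁆ f = D X (D Y f) - D Y (D X f)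
  bracket_smul : ∀ (f : F) (X Y : V), ⁅X, f • Y⁆ = f • ⁅X, Y⁆ + D X f • Y

/-- An almost paracontact metric manifold, modelled abstractly: a quadruple
`(ψ, ζ, τ, g)` where `ψ` is a `(1,1)`-tensor field, `ζ` a vector field, `τ` a
one-form and `g` a pseudo-Riemannian metric, satisfying `ψ² = Id - τ ⊗ ζ`,
`τ(ζ) = 1` and `g(ψX, ψY) = -g(X,Y) + τ(X)τ(Y)` (together with the standard
consequent identities `ψζ = 0`, `τ ∘ ψ = 0`), and the Levi-Civita connection
`nabla` of `g` (characterised by metricity and torsion-freeness). -/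
structure APCMS (F V : Type*) [CommRing F] [Algebra ℝ F]
    [LieRing V] [Module F V] [Module ℝ V] [IsScalarTower ℝ F V]
    extends SmoothSetting F V where
  psi : V → V
  zeta : V
  tau : V → F
  g : V → V → F
  psi_add : ∀ X Y : V, psi (X + Y) = psi X + psi Y
  psi_smul : ∀ (f : F) (X : V), psi (f • X) = f • psi X
  tau_add : ∀ X Y : V, tau (X + Y) = tau X + tau Y
  tau_smul : ∀ (f : F) (X : V), tau (f • X) = f * tau X
  g_addX : ∀ X Y Z : V, g (X + Y) Z = g X Z + g Y Z
  g_smulX : ∀ (f : F) (X Y : V), g (f • X) Y = f * g X Y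
  g_symm : ∀ X Y : V, g X Y = g Y X
  g_nondeg : ∀ X : V, (∀ Y : V, g X Y = 0) → X = 0
  psi_psi : ∀ X : V, psi (psi X) = X - tau X • zeta
  tau_zeta : tau zeta = 1
  psi_zeta : psi zeta = 0
  tau_psi : ∀ X : V, tau (psi X) = 0
  g_psi_psi : ∀ X Y : V, g (psi X) (psi Y) = - g X Y + tau X * tau Y
  nabla : V → V → V
  nabla_addX : ∀ X Y Z : V, nabla (X + Y) Z = nabla X Z + nabla Y Z
  nabla_smulX : ∀ (f : F) (X Y : V), nabla (f • X) Y = f • nabla X Y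
  nabla_addY : ∀ X Y Z : V, nabla X (Y + Z) = nabla X Y + nabla X Z
  nabla_leibniz : ∀ (X : V) (f : F) (Y : V),
    nabla X (f • Y) = D X f • Y + f • nabla X Y
  nabla_torsion_free : ∀ X Y : V, nabla X Y - nabla Y X = ⁅X, Y⁆
  nabla_metric : ∀ X Y Z : V,
    D X (g Y Z) = g (nabla X Y) Z + g Y (nabla X Z)

namespace APCMS

variable {F V : Type*} [CommRing F] [Algebra ℝ F]
  [LieRing V] [Module F V] [Module ℝ V] [IsScalarTower ℝ F V]
variable (A : APCMS F V)

/-- The fundamental form `Ψ(X,Y) = g(X, ψY)`. -/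
def Psi2 (X Y : V) : F := A.g X (A.psi Y)

/-- The exterior derivative `dτ`, via the coboundary formula
`2 dτ(X,Y) = X τ(Y) - Y τ(X) - τ([X,Y])`. -/
def dTau (X Y : V) : F :=
  ((1:ℝ)/2) • (A.D X (A.tau Y) - A.D Y (A.tau X) - A.tau ⁅X, Y⁆)

/-- The exterior derivative `dΨ`, via the coboundary formula. -/
def dPsi (X Y Z : V) : F :=
  ((1:ℝ)/3) • (A.D X (A.Psi2 Y Z) + A.D Y (A.Psi2 Z X) + A.D Z (A.Psi2 X Y)
    - A.Psi2 ⁅X, Y⁆ Z - A.Psi2 ⁅Y, Z⁆ X - A.Psi2 ⁅Z, X⁆ Y)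

/-- The Lie derivative `(L_ζ τ)(X)`. -/
def lieTau (X : V) : F := A.D A.zeta (A.tau X) - A.tau ⁅A.zeta, X⁆

/-- The Lie derivative `(L_ζ ψ)(X)`. -/
def liePsi (X : V) : V := ⁅A.zeta, A.psi X⁆ - A.psi ⁅A.zeta, X⁆

/-- The tensor field `h = (1/2) L_ζ ψ`. -/
def h (X : V) : V := ((1:ℝ)/2) • A.liePsi X

/-- The Nijenhuis torsion `[ψ,ψ](X,Y)`. -/
def nijPsi (X Y : V) : V :=
  A.psi (A.psi ⁅X, Y⁆) + ⁅A.psi X, A.psi Y⁆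
    - A.psi ⁅A.psi X, Y⁆ - A.psi ⁅X, A.psi Y⁆

/-- The tensor `K⁽¹⁾(X,Y) = [ψ,ψ](X,Y) - 2 dτ(X,Y) ζ`. -/
def K1 (X Y : V) : V := A.nijPsi X Y - (2 * A.dTau X Y) • A.zeta

/-- The tensor `K⁽²⁾(X,Y) = (L_{ψX} τ)(Y) - (L_{ψY} τ)(X)`. -/
def K2 (X Y : V) : F :=
  (A.D (A.psi X) (A.tau Y) - A.tau ⁅A.psi X, Y⁆)
    - (A.D (A.psi Y) (A.tau X) - A.tau ⁅A.psi Y, X⁆)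

/-- The covariant derivative `(∇_X ψ)(Y)`. -/
def covPsi (X Y : V) : V := A.nabla X (A.psi Y) - A.psi (A.nabla X Y)

/-- `M` is `τ`-normal: `K⁽¹⁾(X,Y) = 0` whenever `τ(X) = τ(Y) = 0`. -/
def TauNormal : Prop := ∀ X Y : V, A.tau X = 0 → A.tau Y = 0 → A.K1 X Y = 0

/-- `M` is normal: `K⁽¹⁾ = 0` identically. -/
def Normal : Prop := ∀ X Y : V, A.K1 X Y = 0

/-- `X` is a section of the `+1`-eigendistribution `V⁺` of `ψ`. -/
def Vp (X : V) : Prop := A.psi X = X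

/-- `X` is a section of the `-1`-eigendistribution `V⁻` of `ψ`. -/
def Vm (X : V) : Prop := A.psi X = -X

/-- `M` is a para-CR manifold: both eigendistributions `V⁺`, `V⁻` of `ψ` are
involutive. -/
def ParaCR : Prop :=
  (∀ X Y : V, A.Vp X → A.Vp Y → A.Vp ⁅X, Y⁆) ∧
  (∀ X Y : V, A.Vm X → A.Vm Y → A.Vm ⁅X, Y⁆)

/-- The characteristic form `τ` is a contact form: `dτ` is nondegenerate on
the kernel distribution of `τ`. -/
def IsContact : Prop :=
  ∀ X : V, A.tau X = 0 → (∀ Y : V, A.dTau X Y = 0) → X = 0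

/-- The Reeb vector field of the contact form `τ` equals the characteristic
vector field `ζ` (i.e. `τ(ζ) = 1`, which holds by definition, and
`ι_ζ dτ = 0`). -/
def ReebEqZeta : Prop := ∀ X : V, A.dTau A.zeta X = 0

/-- The Pang invariant `Π(X,Y) = (L_X L_Y τ)(ζ) = -τ([[ζ,X],Y])`; restricted
to sections of `V⁺` (resp. `V⁻`) it is the Pang invariant `Π₊` (resp. `Π₋`)
of the Legendrian foliation determined by `V⁺` (resp. `V⁻`). -/
def Pang (X Y : V) : F := - A.tau ⁅⁅A.zeta, X⁆, Y⁆

/-- The tensor field `χ(X,Y) = dτ(hX, ψY)`. -/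
def chi (X Y : V) : F := A.dTau (A.h X) (A.psi Y)

/-- `Dc` is a linear connection on `M`. -/
def IsConnection (Dc : V → V → V) : Prop :=
  (∀ X Y Z : V, Dc (X + Y) Z = Dc X Z + Dc Y Z) ∧
  (∀ (f : F) (X Y : V), Dc (f • X) Y = f • Dc X Y) ∧
  (∀ X Y Z : V, Dc X (Y + Z) = Dc X Y + Dc X Z) ∧
  (∀ (X : V) (f : F) (Y : V), Dc X (f • Y) = A.D X f • Y + f • Dc X Y)

/-- `Dc` is a parallelization: a linear connection making the whole almost
paracontact metric structure parallel: `∇̃ψ = 0`, `∇̃ζ = 0`, `∇̃τ = 0`,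
`∇̃g = 0`. -/
def IsParallelization (Dc : V → V → V) : Prop :=
  A.IsConnection Dc ∧
  (∀ X Y : V, Dc X (A.psi Y) = A.psi (Dc X Y)) ∧
  (∀ X : V, Dc X A.zeta = 0) ∧
  (∀ X Y : V, A.D X (A.tau Y) = A.tau (Dc X Y)) ∧
  (∀ X Y Z : V, A.D X (A.g Y Z) = A.g (Dc X Y) Z + A.g Y (Dc X Z))

end APCMS

namespace APCMS

section Aux

variable {F V : Type*} [CommRing F] [Algebra ℝ F]
  [LieRing V] [Module F V] [Module ℝ V] [IsScalarTower ℝ F V]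
variable (A : APCMS F V)

lemma two_half' (t : F) : (2:F) * (((1:ℝ)/2) • t) = t := by
  rw [Algebra.smul_def, show ((2:F)) = algebraMap ℝ F 2 by rw [map_ofNat],
    ← mul_assoc, ← map_mul]
  norm_num

lemma three_third' (t : F) : ((3:ℝ)) • (((1:ℝ)/3) • t) = t := by
  rw [smul_smul, show (3:ℝ)*((1:ℝ)/3) = 1 by norm_num, one_smul]

lemma D_zero (X : V) : A.D X (0:F) = 0 := by
  have h := A.D_add X 0 0
  rw [add_zero] at h
  exact (left_eq_add.mp h)

lemma D_neg (X : V) (f : F) : A.D X (-f) = -A.D X f := by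
  have h := A.D_add X f (-f)
  rw [add_neg_cancel, A.D_zero] at h
  exact eq_neg_of_add_eq_zero_right h.symm

lemma D_sub (X : V) (f g : F) : A.D X (f - g) = A.D X f - A.D X g := by
  rw [sub_eq_add_neg, A.D_add, A.D_neg, ← sub_eq_add_neg]

lemma g_negX (a b : V) : A.g (-a) b = -A.g a b := by
  rw [show -a = (-1:F) • a by rw [neg_one_smul], A.g_smulX, neg_one_mul]

lemma g_subX (a b c : V) : A.g (a - b) c = A.g a c - A.g b c := by
  rw [sub_eq_add_neg, A.g_addX, A.g_negX, ← sub_eq_add_neg]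

lemma g_zeroX (b : V) : A.g 0 b = 0 := by
  have h := A.g_addX 0 0 b
  rw [add_zero] at h
  exact (left_eq_add.mp h)

lemma g_zeroY (a : V) : A.g a 0 = 0 := by rw [A.g_symm, A.g_zeroX]

lemma g_addY (a b c : V) : A.g a (b + c) = A.g a b + A.g a c := by
  rw [A.g_symm, A.g_addX, A.g_symm b a, A.g_symm c a]

lemma g_negY (a b : V) : A.g a (-b) = -A.g a b := by
  rw [A.g_symm, A.g_negX, A.g_symm b a]

lemma g_subY (a b c : V) : A.g a (b - c) = A.g a b - A.g a c := by
  rw [A.g_symm, A.g_subX, A.g_symm b a, A.g_symm c a]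

lemma g_smulY (f : F) (a b : V) : A.g a (f • b) = f * A.g a b := by
  rw [A.g_symm, A.g_smulX, A.g_symm b a]

lemma tau_neg (a : V) : A.tau (-a) = -A.tau a := by
  rw [show -a = (-1:F) • a by rw [neg_one_smul], A.tau_smul, neg_one_mul]

lemma g_zeta (a : V) : A.g a A.zeta = A.tau a := by
  have h := A.g_psi_psi a A.zeta
  rw [A.psi_zeta, A.g_zeroY, A.tau_zeta, mul_one] at h
  linear_combination h

lemma g_zeta' (a : V) : A.g A.zeta a = A.tau a := by
  rw [A.g_symm, A.g_zeta]

lemma g_psi_skew (a b : V) : A.g (A.psi a) b = -A.g a (A.psi b) := by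
  have h := A.g_psi_psi a (A.psi b)
  rw [A.tau_psi, mul_zero, add_zero, A.psi_psi, A.g_subY, A.g_smulY,
    A.g_zeta, A.tau_psi, mul_zero, sub_zero] at h
  exact h

lemma koszul (X Y Z : V) : (2:F) * A.g (A.nabla X Y) Z =
    A.D X (A.g Y Z) + A.D Y (A.g Z X) - A.D Z (A.g X Y)
      + A.g ⁅X, Y⁆ Z - A.g ⁅X, Z⁆ Y - A.g ⁅Y, Z⁆ X := by
  have m1 := A.nabla_metric X Y Z
  have m2 := A.nabla_metric Y Z X
  have m3 := A.nabla_metric Z X Y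
  rw [A.g_symm Y (A.nabla X Z)] at m1
  rw [A.g_symm Z (A.nabla Y X)] at m2
  rw [A.g_symm X (A.nabla Z Y)] at m3
  have t1 : A.g ⁅X, Y⁆ Z = A.g (A.nabla X Y) Z - A.g (A.nabla Y X) Z := by
    rw [← A.nabla_torsion_free, A.g_subX]
  have t2 : A.g ⁅X, Z⁆ Y = A.g (A.nabla X Z) Y - A.g (A.nabla Z X) Y := by
    rw [← A.nabla_torsion_free, A.g_subX]
  have t3 : A.g ⁅Y, Z⁆ X = A.g (A.nabla Y Z) X - A.g (A.nabla Z Y) X := by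
    rw [← A.nabla_torsion_free, A.g_subX]
  linear_combination -m1 - m2 + m3 - t1 + t2 + t3

end Aux

end APCMS

/-- On any almost paracontact metric manifold the Levi-Civita
connection satisfies
`2g((∇_X ψ)Y, Z) = -3dΨ(X, ψY, ψZ) - 3dΨ(X, Y, Z) - g(K⁽¹⁾(Y,Z), ψX)
+ K⁽²⁾(Y,Z)τ(X) + 2dτ(ψY, X)τ(Z) - 2dτ(ψZ, X)τ(Y)` for all `X, Y, Z`. -/
theorem paracontact_covariant_derivative_formula
    {F V : Type*} [CommRing F] [Algebra ℝ F]
    [LieRing V] [Module F V] [Module ℝ V] [IsScalarTower ℝ F V]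
    (A : APCMS F V) :
    ∀ X Y Z : V, (2:F) * A.g (A.covPsi X Y) Z =
      -(((3:ℝ)) • A.dPsi X (A.psi Y) (A.psi Z)) - ((3:ℝ)) • A.dPsi X Y Z
        - A.g (A.K1 Y Z) (A.psi X) + A.K2 Y Z * A.tau X
        + 2 * A.dTau (A.psi Y) X * A.tau Z
        - 2 * A.dTau (A.psi Z) X * A.tau Y := by
  intro X Y Z
  have k1 := A.koszul X (A.psi Y) Z
  have k2 := A.koszul X Y (A.psi Z)
  have hb1 : ⁅A.psi Y, X⁆ = -⁅X, A.psi Y⁆ := (lie_skew _ _).symm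
  have hb2 : ⁅A.psi Z, X⁆ = -⁅X, A.psi Z⁆ := (lie_skew _ _).symm
  have hb3 : ⁅A.psi Z, Y⁆ = -⁅Y, A.psi Z⁆ := (lie_skew _ _).symm
  have hb4 : ⁅Z, X⁆ = -⁅X, Z⁆ := (lie_skew _ _).symm
  simp only [APCMS.covPsi, APCMS.dPsi, APCMS.dTau, APCMS.K1, APCMS.K2,
    APCMS.nijPsi, APCMS.Psi2, APCMS.two_half' (F := F), APCMS.three_third' (F := F),
    hb1, hb2, hb3, hb4,
    A.psi_psi, A.psi_zeta, A.psi_add, A.psi_smul,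
    A.g_addX, A.g_subX, A.g_negX, A.g_smulX, A.g_zeroX,
    A.g_addY, A.g_subY, A.g_negY, A.g_smulY, A.g_zeroY,
    A.g_zeta, A.g_zeta', A.g_psi_skew,
    A.tau_psi, A.tau_zeta, A.tau_add, A.tau_smul, A.tau_neg,
    A.D_add, A.D_sub, A.D_neg, A.D_zero, A.D_mul,
    mul_zero, zero_mul, add_zero, zero_add, sub_zero, zero_sub,
    neg_zero, neg_neg, mul_one, one_mul, mul_neg, neg_mul,
    smul_zero, zero_smul, sub_neg_eq_add] at k1 k2 ⊢
  linear_combination k1 + k2
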